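/- arXiv:1302.5654 — 4 statements merged into one kernel-verified Lean document; each statement's English description precedes it below -/
import Mathlib

section
/- Let V be a finite-dimensional vector space over a field F, and let E₁, …, Eₙ be subsets of V each contained in a one-dimensional subspace of V. Let S = {1, …, n} and let 𝓘 be the collection of subsets I = {i₁, …, iⱼ} of S such that {E_{i₁} ∪ (−E_{i₁}), …, E_{iⱼ} ∪ (−E_{iⱼ})} forms a LISF. Then (S, 𝓘) is a matroid. -/
/-- A family of nonempty subsets of a vector space is a *linearly independent set
family* (LISF) if every selection of one vector from each set is linearly
independent. -/
def IsLISF (F : Type*) {V ι : Type*} [Field F] [AddCommGroup V] [Module F V]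
    (C : ι → Set V) : Prop :=
  (∀ i, (C i).Nonempty) ∧ ∀ v : ι → V, (∀ i, v i ∈ C i) → LinearIndependent F v

/-!
Each `E i ∪ -E i` lies on a line, so once it is nonempty and avoids `0`, every selection from
it is a nonzero multiple of one fixed representative `w i`. Hence, putting `w i = 0` when `E i`
is empty or contains `0`, a set `I` is independent exactly when `w` is linearly independent on
`I`, and the exchange axiom is the usual dimension count for spans.
-/

section

variable {F V ι : Type*} [Field F] [AddCommGroup V] [Module F V]

theorem LinearIndepOn.exists_insert_of_card_lt [DecidableEq ι] {w : ι → V} {I J : Finset ι}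
    (hI : LinearIndepOn F w I) (hJ : LinearIndepOn F w J) (hIJ : I.card < J.card) :
    ∃ e ∈ J \ I, LinearIndepOn F w (insert e I) := by
  by_contra! hno
  have hspan : Set.range (fun j : (J : Set ι) => w j) ⊆
      Submodule.span F (Set.range fun i : (I : Set ι) => w i) := by
    rintro _ ⟨⟨e, he⟩, rfl⟩
    by_cases heI : e ∈ I
    · exact Submodule.subset_span ⟨⟨e, heI⟩, rfl⟩
    · by_contra hnot
      refine hno e (Finset.mem_sdiff.2 ⟨he, heI⟩) (hI.insert ?_)
      rwa [Set.image_eq_range]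
  have := FiniteDimensional.span_of_finite F (Set.finite_range fun i : (I : Set ι) => w i)
  have := Submodule.finrank_mono (Submodule.span_le.2 hspan)
  rw [finrank_span_eq_card hJ, finrank_span_eq_card hI] at this
  simp only [Finset.coe_sort_coe, Fintype.card_coe] at this
  omega

theorem IsLISF.zero_notMem {C : ι → Set V} (hC : IsLISF F C) (i : ι) : 0 ∉ C i := by
  classical
  intro h0
  choose v hv using hC.1
  have := hC.2 (Function.update v i 0) fun j => by
    rcases eq_or_ne j i with rfl | hj
    · simpa using h0
    · simpa [hj] using hv j
  exact this.ne_zero i (by simp)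

theorem isLISF_iff_linearIndependent {C : ι → Set V}
    (hC : ∀ i, ∃ W : Submodule F V, Module.finrank F W = 1 ∧ C i ⊆ W)
    {w : ι → V} (hw : ∀ i, w i ∈ C i) :
    IsLISF F C ↔ (∀ i, 0 ∉ C i) ∧ LinearIndependent F w := by
  refine ⟨fun h => ⟨h.zero_notMem, h.2 w hw⟩, fun ⟨h0, hli⟩ => ⟨fun i => ⟨w i, hw i⟩, ?_⟩⟩
  intro v hv
  have hne : ∀ i, v i ≠ 0 := fun i h => h0 i (h ▸ hv i)
  have : ∀ i, ∃ c : F, c • w i = v i := fun i => by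
    obtain ⟨W, hW, hCW⟩ := hC i
    rw [← Submodule.mem_span_singleton,
      ← eq_span_singleton_of_mem_of_finrank_eq_one hW (hCW (hw i)) (hli.ne_zero i)]
    exact hCW (hv i)
  choose c hc using this
  have hc0 : ∀ i, c i ≠ 0 := fun i h => hne i (by rw [← hc i, h, zero_smul])
  convert hli.units_smul fun i => Units.mk0 (c i) (hc0 i) using 1
  ext i
  simp [← hc i, Units.smul_def]

theorem exists_isLISF_union_neg_iff_linearIndepOn {E : ι → Set V}
    (hE : ∀ i, ∃ W : Submodule F V, Module.finrank F W = 1 ∧ E i ⊆ W) :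
    ∃ w : ι → V, ∀ s : Set ι, IsLISF F (fun i : s => E i ∪ -E i) ↔ LinearIndepOn F w s := by
  classical
  -- `w i = 0` exactly when `i` lies in no independent set
  let w i := if h : (E i).Nonempty ∧ 0 ∉ E i then h.1.some else 0
  have hw : ∀ i, (E i).Nonempty → 0 ∉ E i → w i ∈ E i := fun i hne h0 => by
    simp only [w, dif_pos (And.intro hne h0)]
    exact hne.some_mem
  refine ⟨w, fun s => ⟨fun hL => ?_, fun hli => ?_⟩⟩
  · have hne : ∀ i : s, (E i).Nonempty := fun i => by
      simpa [Set.union_nonempty] using hL.1 i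
    have h0 : ∀ i : s, 0 ∉ E i := fun i h => hL.zero_notMem i (Or.inl h)
    exact hL.2 (fun i => w i) fun i => Or.inl (hw i (hne i) (h0 i))
  · have hgood : ∀ i : s, (E i).Nonempty ∧ 0 ∉ E i := fun i => by
      by_contra h
      exact hli.ne_zero i.2 (by simp only [w, dif_neg h])
    have hC : ∀ i : s, ∃ W : Submodule F V, Module.finrank F W = 1 ∧ E i ∪ -E i ⊆ W :=
      fun i => by
        obtain ⟨W, hW, hEW⟩ := hE i
        refine ⟨W, hW, Set.union_subset hEW fun x hx => ?_⟩
        simpa using W.neg_mem (hEW hx)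
    refine (isLISF_iff_linearIndependent hC fun i => Or.inl (hw i (hgood i).1 (hgood i).2)).2
      ⟨fun i h => (hgood i).2 ?_, hli⟩
    simpa using h

end

theorem lisf_union_neg_matroid_general (F V : Type*) [Field F] [AddCommGroup V] [Module F V]
    (n : ℕ) (E : Fin n → Set V)
    (hE : ∀ i, ∃ W : Submodule F V, Module.finrank F W = 1 ∧ E i ⊆ W)
    (𝓘 : Finset (Fin n) → Prop)
    (h𝓘 : ∀ I : Finset (Fin n), 𝓘 I ↔ IsLISF F (fun i : I => E i.val ∪ (-E i.val))) :
    𝓘 ∅ ∧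
    (∀ I J : Finset (Fin n), 𝓘 I → J ⊆ I → 𝓘 J) ∧
    (∀ I₁ I₂ : Finset (Fin n), 𝓘 I₁ → 𝓘 I₂ → I₁.card < I₂.card →
      ∃ e ∈ I₂ \ I₁, 𝓘 (insert e I₁)) := by
  obtain ⟨w, hw⟩ := exists_isLISF_union_neg_iff_linearIndepOn hE
  have h𝓘w : ∀ I, 𝓘 I ↔ LinearIndepOn F w I := fun I => (h𝓘 I).trans (hw I)
  refine ⟨(h𝓘w ∅).2 (by simp), fun I J hI hJI => ?_, fun I₁ I₂ hI₁ hI₂ hlt => ?_⟩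
  · exact (h𝓘w J).2 (((h𝓘w I).1 hI).mono (Finset.coe_subset.2 hJI))
  · obtain ⟨e, he, hli⟩ := ((h𝓘w I₁).1 hI₁).exists_insert_of_card_lt ((h𝓘w I₂).1 hI₂) hlt
    exact ⟨e, he, (h𝓘w _).2 (by rwa [Finset.coe_insert])⟩

theorem lisf_union_neg_matroid (F V : Type*) [Field F] [AddCommGroup V] [Module F V]
    [FiniteDimensional F V] (n : ℕ) (E : Fin n → Set V)
    (hE : ∀ i, ∃ W : Submodule F V, Module.finrank F W = 1 ∧ E i ⊆ W)
    (𝓘 : Finset (Fin n) → Prop)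
    (h𝓘 : ∀ I : Finset (Fin n), 𝓘 I ↔ IsLISF F (fun i : I => E i.val ∪ (-E i.val))) :
    𝓘 ∅ ∧
    (∀ I J : Finset (Fin n), 𝓘 I → J ⊆ I → 𝓘 J) ∧
    (∀ I₁ I₂ : Finset (Fin n), 𝓘 I₁ → 𝓘 I₂ → I₁.card < I₂.card →
      ∃ e ∈ I₂ \ I₁, 𝓘 (insert e I₁)) :=
  lisf_union_neg_matroid_general F V n E hE 𝓘 h𝓘
end

section
/- In ℝ², define E₁ = {(x,y) : (x−1)² + (y−1)² ≤ 1}, E₂ = {(x,y) : (x−1)² + y² ≤ 1} \ {(0,0)}, and E₃ = {(x,y) : (x−1)² + (y+1)² ≤ 1/9}. Let S = {1,2,3} and let 𝓘 be the collection of subsets I of S such that the family {Eᵢ : i ∈ I} is a LISF. Then (S, 𝓘) fails the matroid exchange axiom: {1,3} ∈ 𝓘 and {2} ∈ 𝓘, but neither {1,2} nor {2,3} is in 𝓘. -/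
/-! The sets `E₁` and `E₂` share the point `(1, 1)` and `E₂`, `E₃` share `(1, -1)`; choosing
that point twice shows that neither `E₁, E₂` nor `E₂, E₃` is a LISF. On the other hand `E₁` lies
in the closed first quadrant without the origin and `E₃` in the open fourth quadrant, so any
`a ∈ E₁`, `b ∈ E₃` have `det (a, b) < 0`. -/

open Function

section IsLISF

variable {F V ι ι' : Type*} [Field F] [AddCommGroup V] [Module F V]

theorem IsLISF.comp_equiv {C : ι → Set V} (h : IsLISF F C) (e : ι' ≃ ι) :
    IsLISF F (C ∘ e) := by
  refine ⟨fun i => h.1 (e i), fun v hv => ?_⟩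
  have := h.2 (v ∘ e.symm) fun i => by simpa using hv (e.symm i)
  rwa [← linearIndependent_equiv e, comp_assoc, e.symm_comp_self, comp_id] at this

theorem isLISF_comp_equiv_iff (C : ι → Set V) (e : ι' ≃ ι) :
    IsLISF F (C ∘ e) ↔ IsLISF F C :=
  ⟨fun h => by simpa [comp_assoc] using h.comp_equiv e.symm, fun h => h.comp_equiv e⟩

theorem isLISF_unique_iff [Unique ι] (C : ι → Set V) :
    IsLISF F C ↔ (C default).Nonempty ∧ (0 : V) ∉ C default := by
  simp only [IsLISF, Unique.forall_iff, linearIndependent_unique_iff]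
  exact and_congr_right fun _ => ⟨fun h h0 => h (fun _ => 0) h0 rfl, fun h _ hv hv0 => h (hv0 ▸ hv)⟩

theorem isLISF_fin_two_iff {A B : Set V} :
    IsLISF F ![A, B] ↔
      A.Nonempty ∧ B.Nonempty ∧ ∀ a ∈ A, ∀ b ∈ B, LinearIndependent F ![a, b] := by
  rw [← and_assoc]
  refine and_congr (by simp [Fin.forall_fin_two])
    ⟨fun h a ha b hb => h ![a, b] (Fin.forall_fin_two.2 ⟨ha, hb⟩), fun h v hv => ?_⟩
  convert h _ (hv 0) _ (hv 1)
  exact (FinVec.etaExpand_eq v).symm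

theorem isLISF_pair_iff {α : Type*} [LinearOrder α] (C : α → Set V) {i j : α} (hij : i < j) :
    IsLISF F (fun k : ({i, j} : Finset α) => C k) ↔
      (C i).Nonempty ∧ (C j).Nonempty ∧ ∀ a ∈ C i, ∀ b ∈ C j, LinearIndependent F ![a, b] := by
  rw [← isLISF_comp_equiv_iff _ (Fin.orderIsoPair i j hij).toEquiv, ← isLISF_fin_two_iff]
  congr! 1
  ext k
  fin_cases k <;> rfl

theorem not_isLISF_pair_of_mem {α : Type*} [LinearOrder α] {C : α → Set V} {i j : α}
    (hij : i < j) {v : V} (hi : v ∈ C i) (hj : v ∈ C j) :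
    ¬ IsLISF F (fun k : ({i, j} : Finset α) => C k) := by
  rw [isLISF_pair_iff C hij]
  exact fun h => absurd ((h.2.2 v hi v hj).injective (a₁ := 0) (a₂ := 1) rfl) (by decide)

end IsLISF

theorem linearIndependent_pair_of_det_ne_zero {K : Type*} [Field K] {a b : K × K}
    (h : a.1 * b.2 - a.2 * b.1 ≠ 0) : LinearIndependent K ![a, b] := by
  rw [LinearIndependent.pair_iff]
  intro s t hst
  have h1 : s * a.1 + t * b.1 = 0 := by simpa using congrArg Prod.fst hst
  have h2 : s * a.2 + t * b.2 = 0 := by simpa using congrArg Prod.snd hst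
  constructor
  · have : s * (a.1 * b.2 - a.2 * b.1) = 0 := by linear_combination b.2 * h1 - b.1 * h2
    exact (mul_eq_zero.1 this).resolve_right h
  · have : t * (a.1 * b.2 - a.2 * b.1) = 0 := by linear_combination a.1 * h2 - a.2 * h1
    exact (mul_eq_zero.1 this).resolve_right h

theorem det_neg_of_mem_disks {a b : ℝ × ℝ} (ha : (a.1 - 1) ^ 2 + (a.2 - 1) ^ 2 ≤ 1)
    (hb : (b.1 - 1) ^ 2 + (b.2 + 1) ^ 2 ≤ 1 / 9) : a.1 * b.2 - a.2 * b.1 < 0 := by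
  have hb1 : 0 < b.1 := by nlinarith [sq_nonneg (b.2 + 1)]
  have hb2 : b.2 < 0 := by nlinarith [sq_nonneg (b.1 - 1)]
  have ha1 : 0 ≤ a.1 := by nlinarith [sq_nonneg (a.2 - 1)]
  have ha2 : 0 ≤ a.2 := by nlinarith [sq_nonneg (a.1 - 1)]
  rcases ha1.eq_or_lt with ha1 | ha1
  · have ha2 : 0 < a.2 := by nlinarith
    nlinarith [mul_pos ha2 hb1]
  · nlinarith [mul_neg_of_pos_of_neg ha1 hb2, mul_nonneg ha2 hb1.le]

theorem disks_not_matroid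
    (E : Fin 3 → Set (ℝ × ℝ))
    (hE1 : E 0 = {p : ℝ × ℝ | (p.1 - 1) ^ 2 + (p.2 - 1) ^ 2 ≤ 1})
    (hE2 : E 1 = {p : ℝ × ℝ | (p.1 - 1) ^ 2 + p.2 ^ 2 ≤ 1} \ {(0, 0)})
    (hE3 : E 2 = {p : ℝ × ℝ | (p.1 - 1) ^ 2 + (p.2 + 1) ^ 2 ≤ 1 / 9})
    (𝓘 : Finset (Fin 3) → Prop)
    (h𝓘 : ∀ I : Finset (Fin 3), 𝓘 I ↔ IsLISF ℝ (fun i : I => E i.val)) :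
    𝓘 {0, 2} ∧ 𝓘 {1} ∧ ¬ 𝓘 {0, 1} ∧ ¬ 𝓘 {1, 2} ∧
    ¬ (∀ I₁ I₂ : Finset (Fin 3), 𝓘 I₁ → 𝓘 I₂ → I₁.card < I₂.card →
        ∃ e ∈ I₂ \ I₁, 𝓘 (insert e I₁)) := by
  have hmem₀₁ : ((1, 1) : ℝ × ℝ) ∈ E 0 ∩ E 1 := by rw [hE1, hE2]; norm_num
  have hmem₁₂ : ((1, -1) : ℝ × ℝ) ∈ E 1 ∩ E 2 := by rw [hE2, hE3]; norm_num
  have h02 : 𝓘 {0, 2} := by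
    rw [h𝓘, isLISF_pair_iff E (by decide)]
    refine ⟨⟨_, hmem₀₁.1⟩, ⟨_, hmem₁₂.2⟩, ?_⟩
    rw [hE1, hE3]
    exact fun a ha b hb => linearIndependent_pair_of_det_ne_zero (det_neg_of_mem_disks ha hb).ne
  have h1 : 𝓘 {1} := by
    have h0 : (0 : ℝ × ℝ) ∉ E 1 := by rw [hE2]; exact fun h => h.2 rfl
    rw [h𝓘, isLISF_unique_iff]
    exact ⟨⟨(1, 1), hmem₀₁.2⟩, h0⟩
  have h01 : ¬ 𝓘 {0, 1} := by
    rw [h𝓘]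
    exact not_isLISF_pair_of_mem (by decide) hmem₀₁.1 hmem₀₁.2
  have h12 : ¬ 𝓘 {1, 2} := by
    rw [h𝓘]
    exact not_isLISF_pair_of_mem (by decide) hmem₁₂.1 hmem₁₂.2
  refine ⟨h02, h1, h01, h12, fun hexchange => ?_⟩
  obtain ⟨e, he, hins⟩ := hexchange {1} {0, 2} h1 h02 (by decide)
  fin_cases e
  · exact h01 hins
  · simp at he
  · exact h12 (by rwa [Finset.pair_comm])
end

section
/- In ℝ³, define E₁ = span{(1,0,0),(0,1,0)} \ {(0,y,0) : y ∈ ℝ}, E₂ = span{(0,0,1),(1,1,0)} \ {(0,0,0)}, and E₃ = span{(0,1,0),(0,0,1)} \ {(0,y,0) : y ∈ ℝ}. Let S = {1,2,3} and let 𝓘 be the collection of subsets I of S such that {Eᵢ : i ∈ I} is a LISF. Then {1,3} ∈ 𝓘 and {2} ∈ 𝓘, but neither {1,2} ∈ 𝓘 nor {2,3} ∈ 𝓘; hence (S, 𝓘) is not a matroid. -/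
section IsLISF

variable {F V ι : Type*} [Field F] [AddCommGroup V] [Module F V] {C : ι → Set V}

theorem IsLISF.disjoint (h : IsLISF F C) {i j : ι} (hij : i ≠ j) : Disjoint (C i) (C j) := by
  classical
  refine Set.disjoint_left.2 fun x hxi hxj => hij ?_
  let v : ι → V := fun k => if k = i ∨ k = j then x else (h.1 k).some
  have hv : ∀ k, v k ∈ C k := by
    intro k
    by_cases hk : k = i ∨ k = j
    · rcases hk with rfl | rfl <;> simp [v, hxi, hxj]
    · simpa [v, hk] using (h.1 k).some_mem
  exact (h.2 v hv).injective (by simp [v])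

theorem isLISF_of_subsingleton [Subsingleton ι] (hne : ∀ i, (C i).Nonempty)
    (hzero : ∀ i, (0 : V) ∉ C i) : IsLISF F C :=
  ⟨hne, fun v hv => (linearIndependent_subsingleton_index_iff v).2
    fun i h => hzero i (h ▸ hv i)⟩

end IsLISF

theorem isLISF_of_pivot {F ι κ : Type*} [Field F] {C : ι → Set (κ → F)} (p : ι → κ)
    (hne : ∀ i, (C i).Nonempty) (hpivot : ∀ i, ∀ x ∈ C i, x (p i) ≠ 0)
    (hzero : ∀ i j, i ≠ j → ∀ x ∈ C j, x (p i) = 0) : IsLISF F C := by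
  refine ⟨hne, fun v hv => linearIndependent_iff'.2 fun s g hg i hi => ?_⟩
  have hcoord : ∑ j ∈ s, g j * v j (p i) = g i * v i (p i) :=
    Finset.sum_eq_single i (fun j _ hji => by rw [hzero i j (Ne.symm hji) _ (hv j), mul_zero])
      (fun his => absurd hi his)
  have h0 : g i * v i (p i) = 0 := by
    simpa [hcoord] using congrFun hg (p i)
  exact (mul_eq_zero.1 h0).resolve_right (hpivot i _ (hv i))

section Planes

variable {R : Type*} [Semiring R]

theorem mem_span_e₀_e₁ (x : Fin 3 → R) :
    x ∈ Submodule.span R {(![1, 0, 0] : Fin 3 → R), ![0, 1, 0]} ↔ x 2 = 0 := by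
  rw [Submodule.mem_span_pair]
  refine ⟨by rintro ⟨a, b, rfl⟩; simp, fun h => ⟨x 0, x 1, ?_⟩⟩
  funext i; fin_cases i <;> simp [h]

theorem mem_span_e₂_e₀_add_e₁ (x : Fin 3 → R) :
    x ∈ Submodule.span R {(![0, 0, 1] : Fin 3 → R), ![1, 1, 0]} ↔ x 0 = x 1 := by
  rw [Submodule.mem_span_pair]
  refine ⟨by rintro ⟨a, b, rfl⟩; simp, fun h => ⟨x 2, x 0, ?_⟩⟩
  funext i; fin_cases i <;> simp [h]

theorem mem_span_e₁_e₂ (x : Fin 3 → R) :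
    x ∈ Submodule.span R {(![0, 1, 0] : Fin 3 → R), ![0, 0, 1]} ↔ x 0 = 0 := by
  rw [Submodule.mem_span_pair]
  refine ⟨by rintro ⟨a, b, rfl⟩; simp, fun h => ⟨x 1, x 2, ?_⟩⟩
  funext i; fin_cases i <;> simp [h]

theorem exists_eq_vec_zero_zero_iff (x : Fin 3 → R) :
    (∃ y : R, x = ![0, y, 0]) ↔ x 0 = 0 ∧ x 2 = 0 := by
  refine ⟨by rintro ⟨y, rfl⟩; simp, fun ⟨h0, h2⟩ => ⟨x 1, ?_⟩⟩
  funext i; fin_cases i <;> simp [h0, h2]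

theorem mem_span_e₀_e₁_sdiff_yAxis (x : Fin 3 → R) :
    x ∈ (Submodule.span R {(![1, 0, 0] : Fin 3 → R), ![0, 1, 0]} : Set (Fin 3 → R))
      \ {x | ∃ y : R, x = ![0, y, 0]} ↔ x 2 = 0 ∧ x 0 ≠ 0 := by
  simp only [Set.mem_sdiff, SetLike.mem_coe, mem_span_e₀_e₁, Set.mem_ofPred_eq,
    exists_eq_vec_zero_zero_iff]
  tauto

theorem mem_span_e₂_e₀_add_e₁_sdiff_zero (x : Fin 3 → R) :
    x ∈ (Submodule.span R {(![0, 0, 1] : Fin 3 → R), ![1, 1, 0]} : Set (Fin 3 → R)) \ {0} ↔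
      x 0 = x 1 ∧ x ≠ 0 := by
  simp only [Set.mem_sdiff, SetLike.mem_coe, mem_span_e₂_e₀_add_e₁, Set.mem_singleton_iff]

theorem mem_span_e₁_e₂_sdiff_yAxis (x : Fin 3 → R) :
    x ∈ (Submodule.span R {(![0, 1, 0] : Fin 3 → R), ![0, 0, 1]} : Set (Fin 3 → R))
      \ {x | ∃ y : R, x = ![0, y, 0]} ↔ x 0 = 0 ∧ x 2 ≠ 0 := by
  simp only [Set.mem_sdiff, SetLike.mem_coe, mem_span_e₁_e₂, Set.mem_ofPred_eq,
    exists_eq_vec_zero_zero_iff]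
  tauto

end Planes

theorem planes_not_matroid
    (E : Fin 3 → Set (Fin 3 → ℝ))
    (hE1 : E 0 = (Submodule.span ℝ {(![1, 0, 0] : Fin 3 → ℝ), ![0, 1, 0]} : Set (Fin 3 → ℝ))
      \ {x | ∃ y : ℝ, x = ![0, y, 0]})
    (hE2 : E 1 = (Submodule.span ℝ {(![0, 0, 1] : Fin 3 → ℝ), ![1, 1, 0]} : Set (Fin 3 → ℝ))
      \ {0})
    (hE3 : E 2 = (Submodule.span ℝ {(![0, 1, 0] : Fin 3 → ℝ), ![0, 0, 1]} : Set (Fin 3 → ℝ))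
      \ {x | ∃ y : ℝ, x = ![0, y, 0]})
    (𝓘 : Finset (Fin 3) → Prop)
    (h𝓘 : ∀ I : Finset (Fin 3), 𝓘 I ↔ IsLISF ℝ (fun i : I => E i.val)) :
    𝓘 {0, 2} ∧ 𝓘 {1} ∧ ¬ 𝓘 {0, 1} ∧ ¬ 𝓘 {1, 2} ∧
    ¬ (∀ I₁ I₂ : Finset (Fin 3), 𝓘 I₁ → 𝓘 I₂ → I₁.card < I₂.card →
        ∃ e ∈ I₂ \ I₁, 𝓘 (insert e I₁)) := by
  have hm0 (x : Fin 3 → ℝ) : x ∈ E 0 ↔ x 2 = 0 ∧ x 0 ≠ 0 := hE1 ▸ mem_span_e₀_e₁_sdiff_yAxis x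
  have hm1 (x : Fin 3 → ℝ) : x ∈ E 1 ↔ x 0 = x 1 ∧ x ≠ 0 :=
    hE2 ▸ mem_span_e₂_e₀_add_e₁_sdiff_zero x
  have hm2 (x : Fin 3 → ℝ) : x ∈ E 2 ↔ x 0 = 0 ∧ x 2 ≠ 0 := hE3 ▸ mem_span_e₁_e₂_sdiff_yAxis x
  have H02 : 𝓘 {0, 2} := (h𝓘 _).2 <| isLISF_of_pivot Subtype.val
    (by rintro ⟨i, hi⟩; fin_cases hi <;> [exact ⟨![1, 0, 0], by simp [hm0]⟩;
      exact ⟨![0, 0, 1], by simp [hm2]⟩])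
    (by rintro ⟨i, hi⟩ x hx; fin_cases hi <;> simp_all)
    (by rintro ⟨i, hi⟩ ⟨j, hj⟩ hij x hx; fin_cases hi <;> fin_cases hj <;> simp_all)
  have H1 : 𝓘 {1} := (h𝓘 _).2 <| isLISF_of_subsingleton
    (fun i => ⟨![0, 0, 1], by simp [Finset.mem_singleton.1 i.2, hm1]⟩)
    (fun i => by simp [Finset.mem_singleton.1 i.2, hm1])
  have H01 : ¬ 𝓘 {0, 1} := fun h => ((h𝓘 _).1 h).disjoint (i := ⟨0, by simp⟩) (j := ⟨1, by simp⟩)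
    (by simp) |>.notMem_of_mem_left (a := ![1, 1, 0]) (by simp [hm0]) (by simp [hm1])
  have H12 : ¬ 𝓘 {1, 2} := fun h => ((h𝓘 _).1 h).disjoint (i := ⟨1, by simp⟩) (j := ⟨2, by simp⟩)
    (by simp) |>.notMem_of_mem_left (a := ![0, 0, 1]) (by simp [hm1]) (by simp [hm2])
  refine ⟨H02, H1, H01, H12, fun hexchange => ?_⟩
  obtain ⟨e, he, hins⟩ := hexchange {1} {0, 2} H1 H02 (by decide)
  fin_cases he
  · exact H01 hins
  · exact H12 (by simpa [Finset.pair_comm] using hins)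
end

section
/- Let V = W₁ ⊕ ⋯ ⊕ Wₖ be a direct sum of n-dimensional subspaces over a field F of characteristic zero. Let E₁, …, Eₘ ⊆ V be such that each Eᵢ equals an n_{Eᵢ}-dimensional subspace of V with the zero vector removed, where ⌈n/2⌉ + 1 ≤ n_{Eᵢ} ≤ n, and each Eᵢ is contained in some summand W_{i*}. Let S = {1, …, m} and 𝓘 be the collection of subsets I = {i₁, …, i_r} of S such that {E_{i₁}, …, E_{i_r}} is a LISF. Then (S, 𝓘) is a matroid. -/
open Function Module

theorem lt_add_of_ceil_half_add_one_le {n a b : ℕ} (ha : ⌈(n : ℚ) / 2⌉ + 1 ≤ a)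
    (hb : ⌈(n : ℚ) / 2⌉ + 1 ≤ b) : n < a + b := by
  have hceil := Int.le_ceil ((n : ℚ) / 2)
  have ha' : (⌈(n : ℚ) / 2⌉ : ℚ) + 1 ≤ a := by exact_mod_cast ha
  have hb' : (⌈(n : ℚ) / 2⌉ : ℚ) + 1 ≤ b := by exact_mod_cast hb
  have : (n : ℚ) < a + b := by linarith
  exact_mod_cast this

theorem Submodule.inf_ne_bot_of_finrank_lt_add {K V : Type*} [DivisionRing K] [AddCommGroup V]
    [Module K V] {s t W : Submodule K V} [FiniteDimensional K W] (hs : s ≤ W) (ht : t ≤ W)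
    (h : finrank K W < finrank K s + finrank K t) : s ⊓ t ≠ ⊥ := by
  have : FiniteDimensional K s := Submodule.finiteDimensional_of_le hs
  have : FiniteDimensional K t := Submodule.finiteDimensional_of_le ht
  intro hbot
  have hsum := Submodule.finrank_sup_add_finrank_inf_eq s t
  have hsup := Submodule.finrank_mono (sup_le hs ht)
  rw [hbot, finrank_bot] at hsum
  omega

theorem Submodule.le_of_diff_zero_subset {R M : Type*} [Semiring R] [AddCommMonoid M]
    [Module R M] {U W : Submodule R M} (h : (U : Set M) \ {0} ⊆ W) : U ≤ W := by
  intro x hx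
  by_cases hx0 : x = 0
  · exact hx0 ▸ W.zero_mem
  · exact h ⟨hx, hx0⟩

theorem Finset.exists_mem_sdiff_injOn_insert {α β : Type*} [DecidableEq α] [DecidableEq β]
    (f : α → β) {s t : Finset α} (hs : Set.InjOn f s) (ht : Set.InjOn f t) (hst : s.card < t.card) :
    ∃ e ∈ t \ s, Set.InjOn f (insert e s : Finset α) := by
  have himage : (s.image f).card < (t.image f).card := by
    rwa [card_image_of_injOn hs, card_image_of_injOn ht]
  obtain ⟨y, hyt, hys⟩ := exists_mem_notMem_of_card_lt_card himage
  obtain ⟨e, he, rfl⟩ := mem_image.mp hyt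
  have hes : e ∉ s := fun h => hys (mem_image_of_mem f h)
  refine ⟨e, mem_sdiff.mpr ⟨he, hes⟩, ?_⟩
  rw [coe_insert, Set.injOn_insert (by simpa using hes)]
  exact ⟨hs, by simpa using hys⟩

section LISF

variable {F V ι : Type*} [Field F] [AddCommGroup V] [Module F V]

theorem IsLISF.disjoint_s12 {C : ι → Set V} (hC : IsLISF F C) {a b : ι} (hab : a ≠ b) :
    Disjoint (C a) (C b) := by
  classical
  rw [Set.disjoint_left]
  intro v hva hvb
  choose pick hpick using hC.1
  let sel : ι → V := update (update pick a v) b v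
  have hsel : ∀ i, sel i ∈ C i := by
    intro i
    by_cases hib : i = b
    · subst hib; simpa [sel] using hvb
    by_cases hia : i = a
    · subst hia; simpa [sel, hib] using hva
    · simpa [sel, hia, hib] using hpick i
  refine hab ((hC.2 sel hsel).injective ?_)
  simp [sel, hab]

theorem isLISF_of_iSupIndep {κ : Type*} {W : κ → Submodule F V} (hW : iSupIndep W) {j : ι → κ}
    (hj : Injective j) {C : ι → Set V} (hne : ∀ i, (C i).Nonempty)
    (hCW : ∀ i, C i ⊆ (W (j i) : Set V) \ {0}) : IsLISF F C :=
  ⟨hne, fun _ hv => (hW.comp hj).linearIndependent _ (fun i => (hCW i (hv i)).1)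
    (fun i => (hCW i (hv i)).2)⟩

theorem isLISF_diff_zero_iff_injective {κ : Type*} {W : κ → Submodule F V} (hW : iSupIndep W)
    {U : ι → Submodule F V} {j : ι → κ} (hUW : ∀ i, U i ≤ W (j i)) (hU : ∀ i, U i ≠ ⊥)
    (hmeet : ∀ a b, j a = j b → U a ⊓ U b ≠ ⊥) :
    IsLISF F (fun i => (U i : Set V) \ {0}) ↔ Injective j := by
  refine ⟨fun hC a b hab => ?_, fun hj => isLISF_of_iSupIndep hW hj
    (fun i => Submodule.exists_mem_ne_zero_of_ne_bot (hU i))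
    (fun i => Set.sdiff_subset_sdiff_left (hUW i))⟩
  by_contra hne
  obtain ⟨v, hv, hv0⟩ := Submodule.exists_mem_ne_zero_of_ne_bot (hmeet a b hab)
  exact Set.disjoint_left.mp (hC.disjoint_s12 hne) ⟨hv.1, hv0⟩ ⟨hv.2, hv0⟩

end LISF

theorem lisf_matroid_multidim_general (F V : Type*) [Field F] [AddCommGroup V]
    [Module F V] (k n m : ℕ) (W : Fin k → Submodule F V)
    (hind : iSupIndep W)
    (hdim : ∀ i, Module.finrank F (W i) = n)
    (E : Fin m → Set V) (U : Fin m → Submodule F V)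
    (hEU : ∀ i, E i = (U i : Set V) \ {0})
    (hUlow : ∀ i, ⌈(n : ℚ) / 2⌉ + 1 ≤ Module.finrank F (U i))
    (hUhigh : ∀ i, Module.finrank F (U i) ≤ n)
    (hEW : ∀ i, ∃ j, E i ⊆ W j)
    (𝓘 : Finset (Fin m) → Prop)
    (h𝓘 : ∀ I : Finset (Fin m), 𝓘 I ↔ IsLISF F (fun i : I => E i.val)) :
    𝓘 ∅ ∧
    (∀ I J : Finset (Fin m), 𝓘 I → J ⊆ I → 𝓘 J) ∧
    (∀ I₁ I₂ : Finset (Fin m), 𝓘 I₁ → 𝓘 I₂ → I₁.card < I₂.card →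
      ∃ e ∈ I₂ \ I₁, 𝓘 (insert e I₁)) := by
  choose j hj using hEW
  obtain rfl : E = fun i => (U i : Set V) \ {0} := funext hEU
  have hUpos : ∀ i, 0 < finrank F (U i) := fun i => by
    have := Int.ceil_nonneg (show (0 : ℚ) ≤ n / 2 by positivity)
    have := hUlow i
    omega
  have hUne : ∀ i, U i ≠ ⊥ := fun i hbot =>
    (hUpos i).ne' (by rw [hbot, finrank_bot])
  have hUW : ∀ i, U i ≤ W (j i) := fun i => Submodule.le_of_diff_zero_subset (hj i)
  have hmeet : ∀ a b, j a = j b → U a ⊓ U b ≠ ⊥ := fun a b hab => by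
    have : FiniteDimensional F (W (j a)) :=
      Module.finite_of_finrank_pos ((hdim _).symm ▸ (hUpos a).trans_le (hUhigh a))
    refine Submodule.inf_ne_bot_of_finrank_lt_add (hUW a) (hab ▸ hUW b) ?_
    exact (hdim _).symm ▸ lt_add_of_ceil_half_add_one_le (hUlow a) (hUlow b)
  have hI : ∀ I : Finset (Fin m), 𝓘 I ↔ Set.InjOn j I := fun I =>
    (h𝓘 I).trans <| (isLISF_diff_zero_iff_injective hind (fun i : I => hUW i)
      (fun i => hUne i) (fun a b => hmeet a b)).trans
      Set.injOn_iff_injective.symm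
  refine ⟨(hI ∅).2 (by simp), fun I J hIJ hJI => (hI J).2 (((hI I).1 hIJ).mono (by simpa)),
    fun I₁ I₂ h₁ h₂ hlt => ?_⟩
  obtain ⟨e, he, hinj⟩ := Finset.exists_mem_sdiff_injOn_insert j ((hI _).1 h₁) ((hI _).1 h₂) hlt
  exact ⟨e, he, (hI _).2 hinj⟩

theorem lisf_matroid_multidim (F V : Type*) [Field F] [CharZero F] [AddCommGroup V]
    [Module F V] (k n m : ℕ) (W : Fin k → Submodule F V)
    (hind : iSupIndep W) (hsum : ⨆ i, W i = ⊤)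
    (hdim : ∀ i, Module.finrank F (W i) = n)
    (E : Fin m → Set V) (U : Fin m → Submodule F V)
    (hEU : ∀ i, E i = (U i : Set V) \ {0})
    (hUlow : ∀ i, ⌈(n : ℚ) / 2⌉ + 1 ≤ Module.finrank F (U i))
    (hUhigh : ∀ i, Module.finrank F (U i) ≤ n)
    (hEW : ∀ i, ∃ j, E i ⊆ W j)
    (𝓘 : Finset (Fin m) → Prop)
    (h𝓘 : ∀ I : Finset (Fin m), 𝓘 I ↔ IsLISF F (fun i : I => E i.val)) :
    𝓘 ∅ ∧
    (∀ I J : Finset (Fin m), 𝓘 I → J ⊆ I → 𝓘 J) ∧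
    (∀ I₁ I₂ : Finset (Fin m), 𝓘 I₁ → 𝓘 I₂ → I₁.card < I₂.card →
      ∃ e ∈ I₂ \ I₁, 𝓘 (insert e I₁)) :=
  lisf_matroid_multidim_general F V k n m W hind hdim E U hEU hUlow hUhigh hEW 𝓘 h𝓘
end
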